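/- arXiv:2108.09198 — 2 statements merged into one kernel-verified Lean document; each statement's English description precedes it below -/
import Mathlib

section
/- Let C be an additive right polycyclic code induced by a binary vector a, and suppose α g_1 + g_2 is a nonbinary element of C (under the identification with R_n) with g_1, g_2 binary polynomials of degree less than n and g_1 of minimal degree among all binary h_1 for which α h_1 + h_2 is a nonbinary element of C with h_2 binary. Then g_1 divides x^n − a(x) in F2[x]. -/
open Polynomial

noncomputable section

abbrev F4 : Type := GaloisField 2 2

def IsBin (z : F4) : Prop := z = 0 ∨ z = 1

def IsBinVec {n : ℕ} (a : Fin n → F4) : Prop := ∀ i, IsBin (a i)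

def IsBinPoly (p : Polynomial F4) : Prop := ∀ i, IsBin (p.coeff i)

def polyOfVec {n : ℕ} (c : Fin n → F4) : Polynomial F4 :=
  ∑ i : Fin n, Polynomial.C (c i) * X ^ (i : ℕ)

def rightShift {n : ℕ} (a c : Fin n → F4) : Fin n → F4 := fun i =>
  (if (i : ℕ) = 0 then 0 else c ⟨(i : ℕ) - 1, lt_of_le_of_lt (Nat.sub_le _ _) i.isLt⟩)
    + c ⟨n - 1, Nat.sub_lt i.pos Nat.one_pos⟩ * a i

def leftShift {n : ℕ} (a c : Fin n → F4) : Fin n → F4 := fun i =>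
  (if h : (i : ℕ) + 1 < n then c ⟨(i : ℕ) + 1, h⟩ else 0) + c ⟨0, i.pos⟩ * a i

def seqShift {n : ℕ} (a c : Fin n → F4) : Fin n → F4 := fun i =>
  if h : (i : ℕ) + 1 < n then c ⟨(i : ℕ) + 1, h⟩ else ∑ j, a j * c j

def IsRightPolycyclic {n : ℕ} (a : Fin n → F4) (C : AddSubgroup (Fin n → F4)) : Prop :=
  ∀ c ∈ C, rightShift a c ∈ C

def IsLeftPolycyclic {n : ℕ} (a : Fin n → F4) (C : AddSubgroup (Fin n → F4)) : Prop :=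
  ∀ c ∈ C, leftShift a c ∈ C

def quotMk {n : ℕ} (a : Fin n → F4) :
    Polynomial F4 →+* Polynomial F4 ⧸ Ideal.span {X ^ n - polyOfVec a} :=
  Ideal.Quotient.mk _

def codeImage {n : ℕ} (a : Fin n → F4) (C : AddSubgroup (Fin n → F4)) :
    Set (Polynomial F4 ⧸ Ideal.span {X ^ n - polyOfVec a}) :=
  (fun c => quotMk a (polyOfVec c)) '' (C : Set (Fin n → F4))

/-!
Binary polynomials are the fixed points of the Frobenius map `z ↦ z²`, so they are closed under
division with remainder by a monic binary polynomial. The code is closed under multiplication by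
`x` (right polycyclicity) and hence under multiplication by any binary polynomial. Divide
`M = x^n - a(x)` by `g₁` (monic, being binary and nonzero): `M = g₁ q + r` with `q, r` binary.
Then `q (α g₁ + g₂) ≡ -α r + q g₂ = α r + q g₂ (mod M)` (characteristic two) is a codeword,
nonbinary with `deg r < deg g₁` unless `r = 0`, which minimality of `g₁` forbids.
-/

lemma isBin_iff_frobenius_eq (z : F4) : IsBin z ↔ frobenius F4 2 z = z := by
  rw [frobenius_def, IsBin]
  constructor
  · rintro (rfl | rfl) <;> simp
  · intro h
    have : z * (z - 1) = 0 := by linear_combination h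
    rcases mul_eq_zero.1 this with h0 | h1
    · exact Or.inl h0
    · exact Or.inr (sub_eq_zero.1 h1)

lemma isBinPoly_iff_map_frobenius_eq (p : F4[X]) :
    IsBinPoly p ↔ p.map (frobenius F4 2) = p := by
  simp only [IsBinPoly, isBin_iff_frobenius_eq, Polynomial.ext_iff, coeff_map]

namespace IsBinPoly

variable {p q : F4[X]}

lemma mul (hp : IsBinPoly p) (hq : IsBinPoly q) : IsBinPoly (p * q) := by
  rw [isBinPoly_iff_map_frobenius_eq] at *
  rw [Polynomial.map_mul, hp, hq]

lemma modByMonic (hp : IsBinPoly p) (hq : IsBinPoly q) (hqm : q.Monic) :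
    IsBinPoly (p %ₘ q) := by
  rw [isBinPoly_iff_map_frobenius_eq] at *
  rw [map_modByMonic _ hqm, hp, hq]

lemma divByMonic (hp : IsBinPoly p) (hq : IsBinPoly q) (hqm : q.Monic) :
    IsBinPoly (p /ₘ q) := by
  rw [isBinPoly_iff_map_frobenius_eq] at *
  rw [map_divByMonic _ hqm, hp, hq]

lemma monic (hp : IsBinPoly p) (hp0 : p ≠ 0) : p.Monic :=
  (hp p.natDegree).resolve_left (leadingCoeff_ne_zero.2 hp0)

end IsBinPoly

lemma coeff_polyOfVec {n : ℕ} (c : Fin n → F4) (k : ℕ) :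
    (polyOfVec c).coeff k = if h : k < n then c ⟨k, h⟩ else 0 := by
  simp only [polyOfVec, finsetSum_coeff, coeff_C_mul_X_pow]
  split_ifs with h
  · rw [Finset.sum_eq_single ⟨k, h⟩ (fun i _ hi => if_neg fun hk => hi (Fin.ext hk.symm))
      (by simp)]
    simp
  · exact Finset.sum_eq_zero fun i _ => if_neg fun hk : k = i => h (hk ▸ i.isLt)

lemma degree_polyOfVec_lt {n : ℕ} (c : Fin n → F4) : (polyOfVec c).degree < n := by
  rw [degree_lt_iff_coeff_zero]
  intro m hm
  rw [coeff_polyOfVec, dif_neg (not_lt.2 hm)]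

lemma polyOfVec_add {n : ℕ} (c d : Fin n → F4) :
    polyOfVec (c + d) = polyOfVec c + polyOfVec d := by
  simp only [polyOfVec, Pi.add_apply, C_add, add_mul, Finset.sum_add_distrib]

def polyOfVecHom (n : ℕ) : (Fin n → F4) →+ F4[X] :=
  AddMonoidHom.mk' polyOfVec polyOfVec_add

section Modulus

variable {n : ℕ} {a : Fin n → F4}

lemma monic_X_pow_sub_polyOfVec : (X ^ n - polyOfVec a).Monic :=
  monic_X_pow_sub (degree_polyOfVec_lt a)

lemma degree_X_pow_sub_polyOfVec : (X ^ n - polyOfVec a).degree = (n : WithBot ℕ) := by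
  rw [degree_sub_eq_left_of_degree_lt] <;> rw [degree_X_pow]
  exact degree_polyOfVec_lt a

lemma isBinPoly_X_pow_sub_polyOfVec (ha : IsBinVec a) : IsBinPoly (X ^ n - polyOfVec a) := by
  have hbin : IsBinPoly (polyOfVec a) := fun k => by
    rw [coeff_polyOfVec]
    split_ifs
    exacts [ha _, Or.inl rfl]
  rw [isBinPoly_iff_map_frobenius_eq] at *
  rw [Polynomial.map_sub, Polynomial.map_pow, map_X, hbin]

end Modulus

lemma X_mul_polyOfVec {n : ℕ} (hn : 0 < n) (a c : Fin n → F4) :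
    X * polyOfVec c = polyOfVec (rightShift a c)
      + Polynomial.C (c ⟨n - 1, Nat.sub_lt hn Nat.one_pos⟩) * (X ^ n - polyOfVec a) := by
  ext k
  simp only [coeff_add, coeff_C_mul, coeff_sub, coeff_X_pow, coeff_polyOfVec, rightShift]
  cases k with
  | zero => simp [hn, hn.ne]
  | succ k =>
    rw [coeff_X_mul, coeff_polyOfVec]
    by_cases h1 : k + 1 < n
    · simp only [dif_pos h1, dif_pos (show k < n by omega), if_neg (show ¬ k + 1 = n by omega),
        if_neg (Nat.succ_ne_zero k), Nat.add_sub_cancel]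
      ring
    · by_cases h2 : k < n
      · have hlast : (⟨n - 1, Nat.sub_lt hn Nat.one_pos⟩ : Fin n) = ⟨k, h2⟩ :=
          Fin.ext (by simp; omega)
        simp only [dif_neg h1, dif_pos h2, if_pos (show k + 1 = n by omega), hlast]
        ring
      · simp only [dif_neg h1, dif_neg h2, if_neg (show ¬ k + 1 = n by omega)]
        ring

section CodeImage

variable {n : ℕ} {a : Fin n → F4} {C : AddSubgroup (Fin n → F4)}

lemma codeImage_eq_map :
    codeImage a C = C.map ((quotMk a).toAddMonoidHom.comp (polyOfVecHom n)) := by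
  rw [AddSubgroup.coe_map]
  rfl

lemma quotMk_X_mul_mem_codeImage (hn : 0 < n) (hC : IsRightPolycyclic a C) {z}
    (hz : z ∈ codeImage a C) : quotMk a X * z ∈ codeImage a C := by
  obtain ⟨c, hc, rfl⟩ := hz
  refine ⟨rightShift a c, hC c hc, ?_⟩
  have hM : quotMk a (X ^ n - polyOfVec a) = 0 :=
    Ideal.Quotient.eq_zero_iff_mem.2 (Ideal.subset_span rfl)
  change quotMk a _ = quotMk a X * quotMk a _
  rw [← map_mul, X_mul_polyOfVec hn a c, map_add, map_mul, hM, mul_zero, add_zero]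

lemma quotMk_X_pow_mul_mem_codeImage (hn : 0 < n) (hC : IsRightPolycyclic a C) (k : ℕ) {z}
    (hz : z ∈ codeImage a C) : quotMk a (X ^ k) * z ∈ codeImage a C := by
  induction k with
  | zero => simpa using hz
  | succ k ih =>
    rw [pow_succ', map_mul, mul_assoc]
    exact quotMk_X_mul_mem_codeImage hn hC ih

lemma quotMk_mul_mem_codeImage (hn : 0 < n) (hC : IsRightPolycyclic a C) {p : F4[X]}
    (hp : IsBinPoly p) {z} (hz : z ∈ codeImage a C) : quotMk a p * z ∈ codeImage a C := by
  have hX := fun i => quotMk_X_pow_mul_mem_codeImage hn hC i hz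
  simp only [codeImage_eq_map, SetLike.mem_coe] at hX ⊢
  rw [p.as_sum_support, map_sum, Finset.sum_mul]
  refine AddSubgroup.sum_mem _ fun i _ => ?_
  rcases hp i with h | h
  · simp [h]
  · rw [h, ← X_pow_eq_monomial]
    exact hX i

end CodeImage

lemma remainder_mem_codeImage {n : ℕ} (hn : 0 < n) {a : Fin n → F4} (ha : IsBinVec a)
    {C : AddSubgroup (Fin n → F4)} (hC : IsRightPolycyclic a C) {α : F4} {g₁ g₂ : F4[X]}
    (hg₁ : IsBinPoly g₁) (hg₁m : g₁.Monic)
    (hmem : quotMk a (Polynomial.C α * g₁ + g₂) ∈ codeImage a C) :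
    quotMk a (Polynomial.C α * ((X ^ n - polyOfVec a) %ₘ g₁)
      + ((X ^ n - polyOfVec a) /ₘ g₁ * g₂) %ₘ (X ^ n - polyOfVec a)) ∈ codeImage a C := by
  set M : F4[X] := X ^ n - polyOfVec a
  have hq : IsBinPoly (M /ₘ g₁) := (isBinPoly_X_pow_sub_polyOfVec ha).divByMonic hg₁ hg₁m
  have hdiv := modByMonic_add_div M g₁
  have hdiv' := modByMonic_add_div (M /ₘ g₁ * g₂) M
  have htwo : (2 : F4[X]) = 0 := CharTwo.two_eq_zero
  have heq : quotMk a (Polynomial.C α * (M %ₘ g₁) + (M /ₘ g₁ * g₂) %ₘ M)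
      = quotMk a (M /ₘ g₁) * quotMk a (Polynomial.C α * g₁ + g₂) := by
    rw [← map_mul]
    refine Ideal.Quotient.eq.2 (Ideal.mem_span_singleton'.2
      ⟨-(Polynomial.C α + (M /ₘ g₁ * g₂) /ₘ M), ?_⟩)
    linear_combination Polynomial.C α * hdiv - hdiv' - Polynomial.C α * (M %ₘ g₁) * htwo
  exact heq ▸ quotMk_mul_mem_codeImage hn hC hq hmem

theorem stmt_8_general (n : ℕ) (hn : 0 < n) (a : Fin n → F4) (ha : IsBinVec a)
    (C : AddSubgroup (Fin n → F4)) (hC : IsRightPolycyclic a C)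
    (α : F4)
    (g1 g2 : Polynomial F4) (hg1bin : IsBinPoly g1) (hg2bin : IsBinPoly g2)
    (hg1deg : g1.degree < (n : WithBot ℕ))
    (hg1ne : g1 ≠ 0)
    (hmem : quotMk a (Polynomial.C α * g1 + g2) ∈ codeImage a C)
    (hmin : ∀ h1 h2 : Polynomial F4, IsBinPoly h1 → IsBinPoly h2 → h1 ≠ 0 →
      h1.degree < (n : WithBot ℕ) → h2.degree < (n : WithBot ℕ) →
      quotMk a (Polynomial.C α * h1 + h2) ∈ codeImage a C → g1.degree ≤ h1.degree) :
    ∃ q : Polynomial F4, IsBinPoly q ∧ X ^ n - polyOfVec a = g1 * q := by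
  set M : F4[X] := X ^ n - polyOfVec a
  have hg1monic := hg1bin.monic hg1ne
  have hMbin := isBinPoly_X_pow_sub_polyOfVec ha
  have hqbin := hMbin.divByMonic hg1bin hg1monic
  refine ⟨M /ₘ g1, hqbin, ?_⟩
  suffices hr : M %ₘ g1 = 0 by
    simpa [hr] using (modByMonic_add_div M g1).symm
  by_contra hr
  have hrdeg : (M %ₘ g1).degree < g1.degree := degree_modByMonic_lt M hg1monic
  have hsdeg : ((M /ₘ g1 * g2) %ₘ M).degree < n := by
    rw [← degree_X_pow_sub_polyOfVec (a := a)]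
    exact degree_modByMonic_lt _ monic_X_pow_sub_polyOfVec
  have hsbin := (hqbin.mul hg2bin).modByMonic hMbin monic_X_pow_sub_polyOfVec
  exact (hmin _ _ (hMbin.modByMonic hg1bin hg1monic) hsbin hr (hrdeg.trans hg1deg) hsdeg
    (remainder_mem_codeImage hn ha hC hg1bin hg1monic hmem)).not_gt hrdeg

/-- if `α g1 + g2` is a nonbinary element of the additive right
polycyclic code `C` (induced by the binary vector `a`), with `g1, g2` binary of
degree less than `n` and `g1` of minimal degree among binary parts of nonbinary
elements of `C`, then `g1` divides `x^n - a(x)` in `F2[x]`. -/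
theorem stmt_8 (n : ℕ) (hn : 0 < n) (a : Fin n → F4) (ha : IsBinVec a)
    (C : AddSubgroup (Fin n → F4)) (hC : IsRightPolycyclic a C)
    (α : F4) (hα : α ^ 2 + α + 1 = 0)
    (g1 g2 : Polynomial F4) (hg1bin : IsBinPoly g1) (hg2bin : IsBinPoly g2)
    (hg1deg : g1.degree < (n : WithBot ℕ)) (hg2deg : g2.degree < (n : WithBot ℕ))
    (hg1ne : g1 ≠ 0)
    (hmem : quotMk a (Polynomial.C α * g1 + g2) ∈ codeImage a C)
    (hmin : ∀ h1 h2 : Polynomial F4, IsBinPoly h1 → IsBinPoly h2 → h1 ≠ 0 →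
      h1.degree < (n : WithBot ℕ) → h2.degree < (n : WithBot ℕ) →
      quotMk a (Polynomial.C α * h1 + h2) ∈ codeImage a C → g1.degree ≤ h1.degree) :
    ∃ q : Polynomial F4, IsBinPoly q ∧ X ^ n - polyOfVec a = g1 * q :=
  stmt_8_general n hn a ha C hC α g1 g2 hg1bin hg2bin hg1deg hg1ne hmem hmin
end
end

section
/- Let C be an additive left polycyclic code induced by a binary vector a, identified with its image in R̃_n = F4[x]/⟨x^n − ã(x)⟩ via c ↦ c̃(x) = c_{n−1} + c_{n−2} x + ⋯ + c_0 x^{n−1}, where ã(x) = a_{n−1} + a_{n−2} x + ⋯ + a_0 x^{n−1}. Then there exist binary polynomials g_1, g_2, b of degree less than n such that C is generated as an F2[x]-submodule of R̃_n by α g_1 + g_2 and b, where b is a binary element of C of minimal degree (b = 0 if C has no nonzero binary polynomial), α g_1 + g_2 is a nonbinary element of C with g_1 of minimal degree among binary parts of nonbinary elements of C (zero if C is entirely binary), b divides x^n − ã(x), g_1 divides x^n − ã(x), deg g_2 < deg b when b ≠ 0 and g_2 ≠ 0, and b divides ((x^n − ã(x))/g_1)·g_2 when b ≠ 0 and g_1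 ≠ 0. -/
open Polynomial

noncomputable section

/-- The reversed polynomial `c̃(x) = c_{n-1} + c_{n-2} x + ⋯ + c_0 x^{n-1}`. -/
def polyOfVecRev {n : ℕ} (c : Fin n → F4) : Polynomial F4 :=
  ∑ i : Fin n, Polynomial.C (c i) * X ^ (n - 1 - (i : ℕ))

def quotMkRev {n : ℕ} (a : Fin n → F4) :
    Polynomial F4 →+* Polynomial F4 ⧸ Ideal.span {X ^ n - polyOfVecRev a} :=
  Ideal.Quotient.mk _

def codeImageRev {n : ℕ} (a : Fin n → F4) (C : AddSubgroup (Fin n → F4)) :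
    Set (Polynomial F4 ⧸ Ideal.span {X ^ n - polyOfVecRev a}) :=
  (fun c => quotMkRev a (polyOfVecRev c)) '' (C : Set (Fin n → F4))

/-!
Writing each element of `F4[x]` as `α h₁ + h₂` with binary `h₁, h₂` turns the image of `C` in
`R̃_n` into the set `P` of pairs `(h₁, h₂) ∈ F2[x]²` with `α h₁ + h₂ ∈ C`. Since the left
polycyclic shift is multiplication by `x` in `R̃_n`, `P` is an `F2[x]`-submodule, and it contains
`f · F2[x]²` for the binary polynomial `f = x^n - ã(x)`. Over the principal ideal domain `F2[x]`,
the second coordinates of the pairs `(0, q) ∈ P` form an ideal `(b)` and the first coordinates of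
all pairs an ideal `(g₁)`; reducing the second coordinate of a pair `(g₁, h)` modulo `b` gives
`g₂`. The rows of the triangular matrix `[[g₁, g₂], [0, b]]` generate `P` modulo `f`, and
minimality and divisibility follow from `b ∣ f`, `g₁ ∣ f` and from `(f / g₁) · (g₁, g₂) - (f, 0)`
lying in `P`.
-/

lemma Polynomial.exists_eq_C_mul_map_add_map {R S : Type*} [Semiring R] [CommSemiring S]
    (φ : R →+* S) (w : S) (hw : ∀ z, ∃ u v, z = w * φ u + φ v) (p : S[X]) :
    ∃ p₁ p₂ : R[X], p = C w * p₁.map φ + p₂.map φ := by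
  induction p using Polynomial.induction_on' with
  | add p q hp hq =>
    obtain ⟨p₁, p₂, rfl⟩ := hp
    obtain ⟨q₁, q₂, rfl⟩ := hq
    exact ⟨p₁ + q₁, p₂ + q₂, by simp only [Polynomial.map_add]; ring⟩
  | monomial k z =>
    obtain ⟨u, v, rfl⟩ := hw z
    exact ⟨monomial k u, monomial k v, by simp [C_mul_monomial]⟩

lemma AddSubgroup.mul_mem_of_X_mul_mem {p : ℕ} {B : Type*} [Ring B] (ρ : (ZMod p)[X] →+* B)
    {T : AddSubgroup B} (hX : ∀ x ∈ T, ρ X * x ∈ T) (q : (ZMod p)[X]) {x : B} (hx : x ∈ T) :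
    ρ q * x ∈ T := by
  induction q using Polynomial.induction_on generalizing x with
  | C u =>
    rw [← ZMod.intCast_zmod_cast u, map_intCast, map_intCast, ← zsmul_eq_mul]
    exact T.zsmul_mem hx _
  | add q r hq hr => simpa only [map_add, add_mul] using T.add_mem (hq hx) (hr hx)
  | monomial k u hk =>
    rw [show C u * X ^ (k + 1) = X * (C u * X ^ k) by ring, map_mul, mul_assoc]
    exact hX _ (hk hx)

namespace Polynomial

open Submodule.IsPrincipal

variable {K : Type*} [Field K] {I : Ideal K[X]} {f p : K[X]}

/-- For `f ∈ I` this is `0` exactly when `I = (f)`, the convention `b = 0`, `g₁ = 0` of the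
paper. -/
def reducedGenerator (I : Ideal K[X]) (f : K[X]) : K[X] :=
  if (generator I).degree < f.degree then generator I else 0

lemma reducedGenerator_eq_generator (h : reducedGenerator I f ≠ 0) :
    reducedGenerator I f = generator I :=
  if_pos (ite_ne_right_iff.1 h).1

lemma reducedGenerator_mem : reducedGenerator I f ∈ I := by
  unfold reducedGenerator
  split_ifs
  exacts [generator_mem I, I.zero_mem]

lemma degree_reducedGenerator_lt (hf : f ≠ 0) : (reducedGenerator I f).degree < f.degree := by
  unfold reducedGenerator
  split_ifs with h
  exacts [h, by simpa [bot_lt_iff_ne_bot] using hf]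

lemma reducedGenerator_dvd (h : reducedGenerator I f ≠ 0) (hp : p ∈ I) :
    reducedGenerator I f ∣ p :=
  reducedGenerator_eq_generator h ▸ (mem_iff_generator_dvd I).1 hp

lemma degree_reducedGenerator_le (hp : p ∈ I) (hp0 : p ≠ 0) :
    (reducedGenerator I f).degree ≤ p.degree := by
  by_cases h : reducedGenerator I f = 0
  · simp [h]
  · exact degree_le_of_dvd (reducedGenerator_dvd h hp) hp0

lemma dvd_of_reducedGenerator_eq_zero (hf : f ∈ I) (hf0 : f ≠ 0) (h : reducedGenerator I f = 0)
    (hp : p ∈ I) : f ∣ p := by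
  have hgf : generator I ∣ f := (mem_iff_generator_dvd I).1 hf
  have hdeg : (generator I).degree = f.degree := by
    refine le_antisymm (degree_le_of_dvd hgf hf0) (not_lt.1 fun hlt => ?_)
    simp only [reducedGenerator, if_pos hlt] at h
    exact hf0 (by simpa [h] using hgf)
  exact (associated_of_dvd_of_degree_eq hgf hdeg).symm.dvd.trans ((mem_iff_generator_dvd I).1 hp)

lemma eq_zero_of_reducedGenerator_eq_zero (hf : f ∈ I) (hf0 : f ≠ 0)
    (h : reducedGenerator I f = 0) (hp : p ∈ I) (hdeg : p.degree < f.degree) : p = 0 :=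
  eq_zero_of_dvd_of_degree_lt (dvd_of_reducedGenerator_eq_zero hf hf0 h hp) hdeg

lemma exists_eq_mul_reducedGenerator_add_mul (hf : f ∈ I) (hf0 : f ≠ 0) (hp : p ∈ I) :
    ∃ q r, p = q * reducedGenerator I f + f * r := by
  by_cases h : reducedGenerator I f = 0
  · obtain ⟨r, rfl⟩ := dvd_of_reducedGenerator_eq_zero hf hf0 h hp
    exact ⟨0, r, by simp⟩
  · obtain ⟨q, rfl⟩ := reducedGenerator_dvd h hp
    exact ⟨q, 0, by ring⟩

end Polynomial

section Pairs

variable {A B : Type*} [CommRing A] [Ring B]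

def pairEval (ρ : A →+* B) (u v : B) : A × A →+ B where
  toFun x := ρ x.1 * u + ρ x.2 * v
  map_zero' := by simp
  map_add' x y := by simp only [Prod.fst_add, Prod.snd_add, map_add, add_mul]; abel

lemma pairEval_apply (ρ : A →+* B) (u v : B) (x : A × A) :
    pairEval ρ u v x = ρ x.1 * u + ρ x.2 * v := rfl

lemma pairEval_smul (ρ : A →+* B) (u v : B) (r : A) (x : A × A) :
    pairEval ρ u v (r • x) = ρ r * pairEval ρ u v x := by
  simp [pairEval_apply, mul_add, mul_assoc]

def pairSubmodule (ρ : A →+* B) (T : AddSubgroup B) (hT : ∀ r, ∀ y ∈ T, ρ r * y ∈ T)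
    (u v : B) : Submodule A (A × A) :=
  { (T.comap (pairEval ρ u v)).toAddSubmonoid with
    smul_mem' := fun r x (hx : pairEval ρ u v x ∈ T) =>
      show pairEval ρ u v (r • x) ∈ T from pairEval_smul ρ u v r x ▸ hT r _ hx }

lemma mem_pairSubmodule {ρ : A →+* B} {T : AddSubgroup B} {hT : ∀ r, ∀ y ∈ T, ρ r * y ∈ T}
    {u v : B} {x : A × A} : x ∈ pairSubmodule ρ T hT u v ↔ pairEval ρ u v x ∈ T := Iff.rfl

end Pairs

namespace Submodule

variable {A : Type*} [CommRing A] (P : Submodule A (A × A))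

def fstIdeal : Ideal A := P.map (LinearMap.fst A A A)

def sndIdeal : Ideal A := P.comap (LinearMap.inr A A A)

variable {P}

lemma mem_fstIdeal {p : A} : p ∈ P.fstIdeal ↔ ∃ q, (p, q) ∈ P := by
  simp [fstIdeal]

lemma mem_sndIdeal {q : A} : q ∈ P.sndIdeal ↔ (0, q) ∈ P := Iff.rfl

end Submodule

section HermiteForm

open Polynomial Submodule.IsPrincipal

variable {K : Type*} [Field K] {P : Submodule K[X] (K[X] × K[X])} {f : K[X]}

/-- The rows of a Hermite normal form `[[g₁, g₂], [0, b]]` of `P`, reduced modulo `f`. -/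
structure IsReducedHermiteForm (P : Submodule K[X] (K[X] × K[X])) (f g₁ g₂ b : K[X]) :
    Prop where
  pair_mem : (g₁, g₂) ∈ P
  snd_mem : ((0 : K[X]), b) ∈ P
  degree_g₁_lt : g₁.degree < f.degree
  degree_g₂_lt : g₂.degree < f.degree
  degree_b_lt : b.degree < f.degree
  degree_g₁_le : ∀ x ∈ P, x.1 ≠ 0 → g₁.degree ≤ x.1.degree
  degree_b_le : ∀ q, ((0 : K[X]), q) ∈ P → q ≠ 0 → b.degree ≤ q.degree
  fst_eq_zero_of_g₁_eq_zero : g₁ = 0 → ∀ x ∈ P, x.1.degree < f.degree → x.1 = 0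
  eq_zero_of_b_eq_zero : b = 0 → ∀ q, ((0 : K[X]), q) ∈ P → q.degree < f.degree → q = 0
  g₂_eq_zero_of_g₁_eq_zero : g₁ = 0 → g₂ = 0
  exists_eq_add : ∀ x ∈ P, ∃ (q₁ q₂ : K[X]) (r : K[X] × K[X]),
    x = q₁ • (g₁, g₂) + q₂ • ((0 : K[X]), b) + f • r
  g₁_dvd : g₁ ≠ 0 → g₁ ∣ f
  b_dvd : b ≠ 0 → b ∣ f
  degree_g₂_lt_b : b ≠ 0 → g₂.degree < b.degree
  b_dvd_mul_g₂ : b ≠ 0 → ∀ q, q * g₁ = f → b ∣ q * g₂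

lemma mem_fstIdeal_of_forall_smul_mem (hfP : ∀ x, f • x ∈ P) : f ∈ P.fstIdeal :=
  Submodule.mem_fstIdeal.2 ⟨0, by simpa using hfP (1, 0)⟩

lemma mem_sndIdeal_of_forall_smul_mem (hfP : ∀ x, f • x ∈ P) : f ∈ P.sndIdeal :=
  Submodule.mem_sndIdeal.2 (by simpa using hfP (0, 1))

lemma exists_eq_smul_add_smul_add_smul (hf0 : f ≠ 0) (hfP : ∀ x, f • x ∈ P) {g₂ : K[X]}
    (hg : (reducedGenerator P.fstIdeal f, g₂) ∈ P) {x : K[X] × K[X]} (hx : x ∈ P) :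
    ∃ (q₁ q₂ : K[X]) (r : K[X] × K[X]), x = q₁ • (reducedGenerator P.fstIdeal f, g₂) +
      q₂ • ((0 : K[X]), reducedGenerator P.sndIdeal f) + f • r := by
  have hfst := mem_fstIdeal_of_forall_smul_mem hfP
  have hsnd := mem_sndIdeal_of_forall_smul_mem hfP
  obtain ⟨q₁, r₁, h₁⟩ := exists_eq_mul_reducedGenerator_add_mul hfst hf0
    (Submodule.mem_fstIdeal.2 ⟨x.2, hx⟩)
  set y := x - q₁ • (reducedGenerator P.fstIdeal f, g₂) - f • (r₁, 0) with hy
  have hyP : y ∈ P := P.sub_mem (P.sub_mem hx (P.smul_mem _ hg)) (hfP _)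
  have hy₁ : y.1 = 0 := by simp [hy, h₁, mul_comm]
  obtain ⟨q₂, r₂, h₂⟩ := exists_eq_mul_reducedGenerator_add_mul hsnd hf0
    (Submodule.mem_sndIdeal.2 (by rw [← hy₁]; exact hyP))
  refine ⟨q₁, q₂, (r₁, r₂), Prod.ext ?_ ?_⟩
  · simp [h₁, mul_comm]
  · simp only [Prod.snd_sub, Prod.smul_snd, smul_eq_mul, mul_zero, sub_zero] at h₂
    simp only [Prod.snd_add, Prod.smul_snd, smul_eq_mul]
    linear_combination h₂

theorem exists_isReducedHermiteForm (hf0 : f ≠ 0) (hfP : ∀ x, f • x ∈ P) :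
    ∃ g₁ g₂ b, IsReducedHermiteForm P f g₁ g₂ b := by
  have hfst := mem_fstIdeal_of_forall_smul_mem hfP
  have hsnd := mem_sndIdeal_of_forall_smul_mem hfP
  set g₁ := reducedGenerator P.fstIdeal f
  set b := reducedGenerator P.sndIdeal f
  set e := generator P.sndIdeal
  have he : e ∣ f := (mem_iff_generator_dvd _).1 hsnd
  have he0 : e ≠ 0 := fun h => hf0 (zero_dvd_iff.1 (h ▸ he))
  have hbe : b ≠ 0 → b = e := reducedGenerator_eq_generator
  obtain ⟨h, hg⟩ := Submodule.mem_fstIdeal.1 (reducedGenerator_mem (I := P.fstIdeal) (f := f))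
  have hg₂ : (g₁, h % e) ∈ P := by
    have : (g₁, h % e) = (g₁, h) - (h / e) • ((0 : K[X]), e) := by
      ext <;> simp [EuclideanDomain.mod_eq_sub_mul_div, mul_comm]
    exact this ▸ P.sub_mem hg (P.smul_mem _ (generator_mem P.sndIdeal))
  refine ⟨g₁, h % e, b,
    { pair_mem := hg₂
      snd_mem := Submodule.mem_sndIdeal.1 reducedGenerator_mem
      degree_g₁_lt := degree_reducedGenerator_lt hf0
      degree_g₂_lt := (degree_mod_lt h he0).trans_le (degree_le_of_dvd he hf0)
      degree_b_lt := degree_reducedGenerator_lt hf0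
      degree_g₁_le := fun x hx => degree_reducedGenerator_le (Submodule.mem_fstIdeal.2 ⟨x.2, hx⟩)
      degree_b_le := fun q hq => degree_reducedGenerator_le hq
      fst_eq_zero_of_g₁_eq_zero := fun hg₁ x hx =>
        eq_zero_of_reducedGenerator_eq_zero hfst hf0 hg₁ (Submodule.mem_fstIdeal.2 ⟨x.2, hx⟩)
      eq_zero_of_b_eq_zero := fun hb q hq => eq_zero_of_reducedGenerator_eq_zero hsnd hf0 hb hq
      g₂_eq_zero_of_g₁_eq_zero := fun hg₁ =>
        EuclideanDomain.mod_eq_zero.2 ((mem_iff_generator_dvd _).1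
          (show ((0 : K[X]), h) ∈ P from hg₁ ▸ hg))
      exists_eq_add := fun x hx => exists_eq_smul_add_smul_add_smul hf0 hfP hg₂ hx
      g₁_dvd := fun hg₁ => reducedGenerator_dvd hg₁ hfst
      b_dvd := fun hb => reducedGenerator_dvd hb hsnd
      degree_g₂_lt_b := fun hb => by rw [hbe hb]; exact degree_mod_lt h he0
      b_dvd_mul_g₂ := fun hb q hq => reducedGenerator_dvd hb (Submodule.mem_sndIdeal.2 ?_) }⟩
  simpa [hq] using P.sub_mem (P.smul_mem q hg₂) (hfP (1, 0))

end HermiteForm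

abbrev binMap : (ZMod 2)[X] →+* F4[X] := mapRingHom (algebraMap (ZMod 2) F4)

lemma degree_binMap (q : (ZMod 2)[X]) : (binMap q).degree = q.degree :=
  degree_map_eq_of_injective (algebraMap (ZMod 2) F4).injective q

lemma binMap_eq_zero {q : (ZMod 2)[X]} : binMap q = 0 ↔ q = 0 :=
  Polynomial.map_eq_zero_iff (algebraMap (ZMod 2) F4).injective

lemma binMap_injective : Function.Injective binMap :=
  map_injective _ (algebraMap (ZMod 2) F4).injective

lemma isBin_iff_mem_range (z : F4) : IsBin z ↔ z ∈ Set.range (algebraMap (ZMod 2) F4) := by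
  constructor
  · rintro (rfl | rfl)
    exacts [⟨0, map_zero _⟩, ⟨1, map_one _⟩]
  · rintro ⟨u, rfl⟩
    fin_cases u
    exacts [Or.inl (map_zero _), Or.inr (map_one _)]

lemma isBinPoly_iff_exists_binMap (p : F4[X]) : IsBinPoly p ↔ ∃ q, binMap q = p := by
  simp only [IsBinPoly, isBin_iff_mem_range, ← lifts_iff_coeff_lifts, mem_lifts, coe_mapRingHom]

lemma isBinPoly_binMap (q : (ZMod 2)[X]) : IsBinPoly (binMap q) :=
  (isBinPoly_iff_exists_binMap _).2 ⟨q, rfl⟩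

lemma exists_eq_mul_add_of_sq_add_add_one {α : F4} (hα : α ^ 2 + α + 1 = 0) (z : F4) :
    ∃ u v : ZMod 2, z = α * algebraMap (ZMod 2) F4 u + algebraMap (ZMod 2) F4 v := by
  have h2 : (2 : F4) = 0 := CharTwo.two_eq_zero
  have : Fintype F4 := Fintype.ofFinite F4
  have hz : z ^ 4 = z := by
    simpa [← Nat.card_eq_fintype_card, GaloisField.card 2 2 two_ne_zero] using
      FiniteField.pow_card z
  -- `z ^ 4 - z = z (z + 1) (z + α) (z + α + 1)` in characteristic two
  have hroots : z * (z + 1) * (z + α) * (z + α + 1) = 0 := by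
    linear_combination hz + (z ^ 3 + α * z ^ 3 + α * z ^ 2) * h2 + (z ^ 2 + z) * hα
  simp only [mul_eq_zero] at hroots
  rcases hroots with ((h | h) | h) | h
  · exact ⟨0, 0, by simp [h]⟩
  · exact ⟨0, 1, by simp only [map_zero, mul_zero, map_one, zero_add]; linear_combination h - h2⟩
  · exact ⟨1, 0, by simp only [map_one, mul_one, map_zero, add_zero]; linear_combination h - α * h2⟩
  · exact ⟨1, 1, by simp only [map_one, mul_one]; linear_combination h - (α + 1) * h2⟩

lemma exists_eq_C_mul_binMap_add_binMap {α : F4} (hα : α ^ 2 + α + 1 = 0) (p : F4[X]) :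
    ∃ h₁ h₂ : (ZMod 2)[X], p = C α * binMap h₁ + binMap h₂ :=
  p.exists_eq_C_mul_map_add_map _ α (exists_eq_mul_add_of_sq_add_add_one hα)

lemma exists_isBinPoly_binMap_eq_mul_of_dvd {f g : (ZMod 2)[X]} (hg : g ∣ f) :
    ∃ q : F4[X], IsBinPoly q ∧ binMap f = binMap g * q := by
  obtain ⟨q, rfl⟩ := hg
  exact ⟨binMap q, isBinPoly_binMap q, map_mul _ _ _⟩

namespace IsReducedHermiteForm

variable {α : F4} {Q : Type*} [CommRing Q] {π : F4[X] →+* Q} {T : Set Q}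
  {P : Submodule (ZMod 2)[X] ((ZMod 2)[X] × (ZMod 2)[X])} {f g₁ g₂ b : (ZMod 2)[X]}

lemma binary_minimal (hP : ∀ x, x ∈ P ↔ π (C α * binMap x.1 + binMap x.2) ∈ T)
    (H : IsReducedHermiteForm P f g₁ g₂ b) :
    (binMap b = 0 ∧ ∀ p : F4[X], IsBinPoly p → p.degree < f.degree → π p ∈ T → p = 0) ∨
    (binMap b ≠ 0 ∧ π (binMap b) ∈ T ∧ ∀ p : F4[X], IsBinPoly p → p ≠ 0 →
      p.degree < f.degree → π p ∈ T → (binMap b).degree ≤ p.degree) := by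
  have hP₀ : ∀ q, ((0 : (ZMod 2)[X]), q) ∈ P ↔ π (binMap q) ∈ T := by simp [hP]
  rcases eq_or_ne b 0 with hb | hb
  · refine Or.inl ⟨by rw [hb, map_zero], fun p hp hdeg hpT => ?_⟩
    obtain ⟨q, rfl⟩ := (isBinPoly_iff_exists_binMap p).1 hp
    rw [degree_binMap] at hdeg
    rw [H.eq_zero_of_b_eq_zero hb q ((hP₀ q).2 hpT) hdeg, map_zero]
  · refine Or.inr ⟨mt binMap_eq_zero.1 hb, (hP₀ b).1 H.snd_mem, fun p hp hp0 _ hpT => ?_⟩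
    obtain ⟨q, rfl⟩ := (isBinPoly_iff_exists_binMap p).1 hp
    rw [degree_binMap, degree_binMap]
    exact H.degree_b_le q ((hP₀ q).2 hpT) fun hq => hp0 (by rw [hq, map_zero])

lemma nonbinary_minimal (hP : ∀ x, x ∈ P ↔ π (C α * binMap x.1 + binMap x.2) ∈ T)
    (H : IsReducedHermiteForm P f g₁ g₂ b) :
    (binMap g₁ = 0 ∧ binMap g₂ = 0 ∧ ∀ h₁ h₂ : F4[X], IsBinPoly h₁ → IsBinPoly h₂ →
        h₁.degree < f.degree → h₂.degree < f.degree → π (C α * h₁ + h₂) ∈ T → h₁ = 0) ∨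
    (binMap g₁ ≠ 0 ∧ π (C α * binMap g₁ + binMap g₂) ∈ T ∧
      ∀ h₁ h₂ : F4[X], IsBinPoly h₁ → IsBinPoly h₂ → h₁ ≠ 0 → h₁.degree < f.degree →
        h₂.degree < f.degree → π (C α * h₁ + h₂) ∈ T → (binMap g₁).degree ≤ h₁.degree) := by
  rcases eq_or_ne g₁ 0 with hg | hg
  · refine Or.inl ⟨by rw [hg, map_zero], by rw [H.g₂_eq_zero_of_g₁_eq_zero hg, map_zero],
      fun h₁ h₂ hb₁ hb₂ hdeg _ hT => ?_⟩
    obtain ⟨q₁, rfl⟩ := (isBinPoly_iff_exists_binMap h₁).1 hb₁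
    obtain ⟨q₂, rfl⟩ := (isBinPoly_iff_exists_binMap h₂).1 hb₂
    rw [degree_binMap] at hdeg
    rw [show q₁ = 0 from H.fst_eq_zero_of_g₁_eq_zero hg (q₁, q₂) ((hP _).2 hT) hdeg, map_zero]
  · refine Or.inr ⟨mt binMap_eq_zero.1 hg, (hP (g₁, g₂)).1 H.pair_mem,
      fun h₁ h₂ hb₁ hb₂ h0 _ _ hT => ?_⟩
    obtain ⟨q₁, rfl⟩ := (isBinPoly_iff_exists_binMap h₁).1 hb₁
    obtain ⟨q₂, rfl⟩ := (isBinPoly_iff_exists_binMap h₂).1 hb₂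
    rw [degree_binMap, degree_binMap]
    exact H.degree_g₁_le (q₁, q₂) ((hP _).2 hT) fun (hq : q₁ = 0) => h0 (by rw [hq, map_zero])

lemma exists_eq_of_mem (hP : ∀ x, x ∈ P ↔ π (C α * binMap x.1 + binMap x.2) ∈ T)
    (H : IsReducedHermiteForm P f g₁ g₂ b) (hf : π (binMap f) = 0) {h₁ h₂ : (ZMod 2)[X]}
    (hT : π (C α * binMap h₁ + binMap h₂) ∈ T) :
    ∃ q₁ q₂ : F4[X], IsBinPoly q₁ ∧ IsBinPoly q₂ ∧ π (C α * binMap h₁ + binMap h₂) =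
      π (q₁ * (C α * binMap g₁ + binMap g₂) + q₂ * binMap b) := by
  obtain ⟨q₁, q₂, r, hx⟩ := H.exists_eq_add (h₁, h₂) ((hP _).2 hT)
  refine ⟨binMap q₁, binMap q₂, isBinPoly_binMap q₁, isBinPoly_binMap q₂, ?_⟩
  simp only [Prod.ext_iff, Prod.fst_add, Prod.snd_add, Prod.smul_fst, Prod.smul_snd,
    smul_eq_mul] at hx
  rw [hx.1, hx.2]
  simp only [map_add, map_mul, hf, map_zero]
  ring

lemma mem_of_isBinPoly (hP : ∀ x, x ∈ P ↔ π (C α * binMap x.1 + binMap x.2) ∈ T)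
    (H : IsReducedHermiteForm P f g₁ g₂ b) {q₁ q₂ : F4[X]} (hq₁ : IsBinPoly q₁)
    (hq₂ : IsBinPoly q₂) : π (q₁ * (C α * binMap g₁ + binMap g₂) + q₂ * binMap b) ∈ T := by
  obtain ⟨q₁, rfl⟩ := (isBinPoly_iff_exists_binMap _).1 hq₁
  obtain ⟨q₂, rfl⟩ := (isBinPoly_iff_exists_binMap _).1 hq₂
  convert (hP _).1 (P.add_mem (P.smul_mem q₁ H.pair_mem) (P.smul_mem q₂ H.snd_mem)) using 2
  simp only [Prod.fst_add, Prod.snd_add, Prod.smul_fst, Prod.smul_snd, smul_eq_mul, map_add,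
    map_mul, mul_zero, add_zero]
  ring

lemma exists_mul_binMap_g₂_eq (H : IsReducedHermiteForm P f g₁ g₂ b) (hb : binMap b ≠ 0)
    {q : F4[X]} (hq : IsBinPoly q) (hqf : q * binMap g₁ = binMap f) :
    ∃ r : F4[X], IsBinPoly r ∧ q * binMap g₂ = binMap b * r := by
  obtain ⟨q, rfl⟩ := (isBinPoly_iff_exists_binMap q).1 hq
  obtain ⟨r, hr⟩ := H.b_dvd_mul_g₂ (mt binMap_eq_zero.2 hb) q
    (binMap_injective (by rw [map_mul, hqf]))
  exact ⟨binMap r, isBinPoly_binMap r, by rw [← map_mul, hr, map_mul]⟩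

end IsReducedHermiteForm

section Code

variable {n : ℕ}

lemma coeff_polyOfVecRev (c : Fin n → F4) (k : ℕ) :
    (polyOfVecRev c).coeff k = if h : k < n then c ⟨n - 1 - k, by omega⟩ else 0 := by
  simp only [polyOfVecRev, finsetSum_coeff, coeff_C_mul_X_pow]
  split_ifs with hk
  · rw [Finset.sum_eq_single ⟨n - 1 - k, by omega⟩ (fun i _ hi => if_neg ?_) (by simp)]
    · simp only [if_pos (by omega : k = n - 1 - (n - 1 - k))]
    · exact fun h => hi (Fin.ext (by simp only; omega))
  · exact Finset.sum_eq_zero fun i _ => if_neg (by omega)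

lemma polyOfVecRev_leftShift (hn : 0 < n) (a c : Fin n → F4) :
    polyOfVecRev (leftShift a c) =
      X * polyOfVecRev c - C (c ⟨0, hn⟩) * (X ^ n - polyOfVecRev a) := by
  ext k
  rw [coeff_sub, coeff_C_mul, coeff_sub, coeff_X_pow]
  rcases k with _ | k
  · simp only [coeff_polyOfVecRev, coeff_X_mul_zero, leftShift, dif_pos hn,
      dif_neg (by omega : ¬n - 1 - 0 + 1 < n), if_neg hn.ne]
    ring
  · simp only [coeff_polyOfVecRev, coeff_X_mul, leftShift]
    split_ifs <;> first | omega | skip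
    · simp only [show n - 1 - (k + 1) + 1 = n - 1 - k by omega]
      ring
    · simp only [show n - 1 - k = 0 by omega]
      ring
    · ring

lemma degree_polyOfVecRev_lt (c : Fin n → F4) : (polyOfVecRev c).degree < n :=
  degree_lt_iff_coeff_zero _ _ |>.2 fun k hk => by rw [coeff_polyOfVecRev, dif_neg (by omega)]

lemma isBinPoly_polyOfVecRev {c : Fin n → F4} (hc : IsBinVec c) : IsBinPoly (polyOfVecRev c) :=
  fun k => by
    rw [coeff_polyOfVecRev]
    split_ifs
    exacts [hc _, Or.inl rfl]

def polyOfVecRevHom : (Fin n → F4) →+ F4[X] :=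
  AddMonoidHom.mk' polyOfVecRev fun c d => by
    simp only [polyOfVecRev, Pi.add_apply, C_add, add_mul, Finset.sum_add_distrib]

def codeSubgroup (a : Fin n → F4) (C : AddSubgroup (Fin n → F4)) :
    AddSubgroup (F4[X] ⧸ Ideal.span {X ^ n - polyOfVecRev a}) :=
  C.map ((quotMkRev a).toAddMonoidHom.comp polyOfVecRevHom)

lemma coe_codeSubgroup (a : Fin n → F4) (C : AddSubgroup (Fin n → F4)) :
    (codeSubgroup a C : Set _) = codeImageRev a C := rfl

lemma quotMkRev_X_mul_mem_codeSubgroup (hn : 0 < n) {a : Fin n → F4}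
    {C : AddSubgroup (Fin n → F4)} (hC : IsLeftPolycyclic a C) {x} (hx : x ∈ codeSubgroup a C) :
    quotMkRev a X * x ∈ codeSubgroup a C := by
  obtain ⟨c, hc, rfl⟩ := hx
  refine ⟨leftShift a c, hC c hc, ?_⟩
  have hf : quotMkRev a (X ^ n - polyOfVecRev a) = 0 :=
    Ideal.Quotient.eq_zero_iff_mem.2 (Ideal.mem_span_singleton_self _)
  change quotMkRev a (polyOfVecRev (leftShift a c)) = quotMkRev a X * quotMkRev a (polyOfVecRev c)
  rw [polyOfVecRev_leftShift hn, map_sub, map_mul, map_mul, hf, mul_zero, sub_zero]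

lemma binMap_mul_mem_codeSubgroup (hn : 0 < n) {a : Fin n → F4}
    {C : AddSubgroup (Fin n → F4)} (hC : IsLeftPolycyclic a C) (q : (ZMod 2)[X]) {x}
    (hx : x ∈ codeSubgroup a C) : quotMkRev a (binMap q) * x ∈ codeSubgroup a C :=
  AddSubgroup.mul_mem_of_X_mul_mem ((quotMkRev a).comp binMap)
    (fun y hy => by simpa using quotMkRev_X_mul_mem_codeSubgroup hn hC hy) q hx

lemma exists_binMap_eq_X_pow_sub {a : Fin n → F4} (ha : IsBinVec a) :
    ∃ f : (ZMod 2)[X], binMap f = X ^ n - polyOfVecRev a ∧ f.degree = (n : WithBot ℕ) := by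
  obtain ⟨a', ha'⟩ := (isBinPoly_iff_exists_binMap _).1 (isBinPoly_polyOfVecRev ha)
  have hdeg : a'.degree < (X ^ n : (ZMod 2)[X]).degree := by
    rw [← degree_binMap, ha', degree_X_pow]
    exact degree_polyOfVecRev_lt a
  refine ⟨X ^ n - a', by rw [map_sub, map_pow, ha', coe_mapRingHom, Polynomial.map_X], ?_⟩
  rw [degree_sub_eq_left_of_degree_lt hdeg, degree_X_pow]

end Code

/-- structure theorem for additive left polycyclic codes induced
by a binary vector `a`, identified with their image in
`R̃_n = F4[x]/(x^n - ã(x))` via `c ↦ c̃(x)`: there are binary polynomials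
`g1, g2, b` of degree less than `n` such that `C` is generated as an
`F2[x]`-submodule by `α g1 + g2` and `b`, where `b` is a binary element of `C`
of minimal degree (`b = 0` if none is nonzero), `α g1 + g2` a nonbinary element
of `C` with `g1` of minimal degree among binary parts of nonbinary elements of
`C` (zero if `C` is entirely binary), `b ∣ x^n - ã(x)`, `g1 ∣ x^n - ã(x)`,
`deg g2 < deg b` when `b ≠ 0` and `g2 ≠ 0`, and
`b ∣ ((x^n - ã(x))/g1) · g2` when `b ≠ 0` and `g1 ≠ 0`. -/
theorem stmt_12 (n : ℕ) (hn : 0 < n) (a : Fin n → F4) (ha : IsBinVec a)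
    (C : AddSubgroup (Fin n → F4)) (hC : IsLeftPolycyclic a C)
    (α : F4) (hα : α ^ 2 + α + 1 = 0) :
    ∃ g1 g2 b : Polynomial F4,
      IsBinPoly g1 ∧ IsBinPoly g2 ∧ IsBinPoly b ∧
      g1.degree < (n : WithBot ℕ) ∧ g2.degree < (n : WithBot ℕ) ∧
      b.degree < (n : WithBot ℕ) ∧
      -- b is a binary element of C of minimal degree (or 0 if none)
      ((b = 0 ∧ ∀ p : Polynomial F4, IsBinPoly p → p.degree < (n : WithBot ℕ) →
          quotMkRev a p ∈ codeImageRev a C → p = 0) ∨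
       (b ≠ 0 ∧ quotMkRev a b ∈ codeImageRev a C ∧
          ∀ p : Polynomial F4, IsBinPoly p → p ≠ 0 → p.degree < (n : WithBot ℕ) →
            quotMkRev a p ∈ codeImageRev a C → b.degree ≤ p.degree)) ∧
      -- α g1 + g2 is a nonbinary element of C with g1 of minimal degree (or 0)
      ((g1 = 0 ∧ g2 = 0 ∧ ∀ h1 h2 : Polynomial F4, IsBinPoly h1 → IsBinPoly h2 →
          h1.degree < (n : WithBot ℕ) → h2.degree < (n : WithBot ℕ) →
          quotMkRev a (Polynomial.C α * h1 + h2) ∈ codeImageRev a C → h1 = 0) ∨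
       (g1 ≠ 0 ∧ quotMkRev a (Polynomial.C α * g1 + g2) ∈ codeImageRev a C ∧
          ∀ h1 h2 : Polynomial F4, IsBinPoly h1 → IsBinPoly h2 → h1 ≠ 0 →
            h1.degree < (n : WithBot ℕ) → h2.degree < (n : WithBot ℕ) →
            quotMkRev a (Polynomial.C α * h1 + h2) ∈ codeImageRev a C →
              g1.degree ≤ h1.degree)) ∧
      -- C is generated as an F2[x]-submodule by α g1 + g2 and b
      (∀ c ∈ C, ∃ q1 q2 : Polynomial F4, IsBinPoly q1 ∧ IsBinPoly q2 ∧
        quotMkRev a (polyOfVecRev c)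
          = quotMkRev a (q1 * (Polynomial.C α * g1 + g2) + q2 * b)) ∧
      (∀ q1 q2 : Polynomial F4, IsBinPoly q1 → IsBinPoly q2 →
        quotMkRev a (q1 * (Polynomial.C α * g1 + g2) + q2 * b) ∈ codeImageRev a C) ∧
      -- divisibility conditions in F2[x]
      (b ≠ 0 → ∃ q : Polynomial F4, IsBinPoly q ∧ X ^ n - polyOfVecRev a = b * q) ∧
      (g1 ≠ 0 → ∃ q : Polynomial F4, IsBinPoly q ∧ X ^ n - polyOfVecRev a = g1 * q) ∧
      (b ≠ 0 → g2 ≠ 0 → g2.degree < b.degree) ∧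
      (b ≠ 0 → g1 ≠ 0 → ∀ q : Polynomial F4, IsBinPoly q →
        q * g1 = X ^ n - polyOfVecRev a →
          ∃ r : Polynomial F4, IsBinPoly r ∧ q * g2 = b * r) := by
  obtain ⟨f, hf, hdeg⟩ := exists_binMap_eq_X_pow_sub ha
  have hf0 : f ≠ 0 := fun h => by simp [h] at hdeg
  have hπf : quotMkRev a (binMap f) = 0 := by
    rw [hf, quotMkRev, Ideal.Quotient.eq_zero_iff_mem]
    exact Ideal.mem_span_singleton_self _
  set P := pairSubmodule ((quotMkRev a).comp binMap) (codeSubgroup a C)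
    (binMap_mul_mem_codeSubgroup hn hC) (quotMkRev a (Polynomial.C α)) 1
  have hP : ∀ x, x ∈ P ↔
      quotMkRev a (Polynomial.C α * binMap x.1 + binMap x.2) ∈ codeImageRev a C := fun x => by
    simp [P, mem_pairSubmodule, pairEval_apply, ← coe_codeSubgroup, mul_comm]
  have hfP : ∀ x, f • x ∈ P := fun x => by
    simp only [P, mem_pairSubmodule, pairEval_smul, RingHom.comp_apply, hπf, zero_mul]
    exact AddSubgroup.zero_mem _
  obtain ⟨g₁, g₂, b, H⟩ := exists_isReducedHermiteForm hf0 hfP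
  rw [← hdeg]
  refine ⟨binMap g₁, binMap g₂, binMap b, isBinPoly_binMap g₁, isBinPoly_binMap g₂,
    isBinPoly_binMap b, by simpa only [degree_binMap] using H.degree_g₁_lt,
    by simpa only [degree_binMap] using H.degree_g₂_lt,
    by simpa only [degree_binMap] using H.degree_b_lt, H.binary_minimal hP,
    H.nonbinary_minimal hP, fun c hc => ?_, fun _ _ => H.mem_of_isBinPoly hP,
    fun hb => hf ▸ exists_isBinPoly_binMap_eq_mul_of_dvd (H.b_dvd (mt binMap_eq_zero.2 hb)),
    fun hg => hf ▸ exists_isBinPoly_binMap_eq_mul_of_dvd (H.g₁_dvd (mt binMap_eq_zero.2 hg)),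
    fun hb _ => by simpa only [degree_binMap] using H.degree_g₂_lt_b (mt binMap_eq_zero.2 hb),
    fun hb _ _ hq hqf => H.exists_mul_binMap_g₂_eq hb hq (hqf.trans hf.symm)⟩
  obtain ⟨h₁, h₂, hc'⟩ := exists_eq_C_mul_binMap_add_binMap hα (polyOfVecRev c)
  rw [hc']
  exact H.exists_eq_of_mem hP hπf (hc' ▸ ⟨c, hc, rfl⟩)
end
end
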